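/- arXiv:2005.09909 — 4 statements merged into one kernel-verified Lean document; each statement's English description precedes it below -/
import Mathlib

section
/- Let p ≥ 0, q ≥ 0 with 2p - q > 1, and let U_{δ,ξ}(x) = log(2δ/(δ² + (x-ξ)²)). Then there exist constants C > 0 and δ₀ > 0 (depending only on p, q, and η > 0) such that for all δ ∈ (0, δ₀) and all ξ ∈ ℝ, ∫_{ξ-η/2}^{ξ+η/2} e^{p U_{δ,ξ}(x)} |x-ξ|^q dx ≤ C δ^{q-p+1}. -/
open Real MeasureTheory

/-!
The substitution `x = ξ + δ t` turns the integrand into `2 ^ p δ ^ (q - p) |t| ^ q / (1 + t²) ^ p`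
and the measure into `δ dt`, so the integral is `2 ^ p δ ^ (q - p + 1)` times an integral of
`|t| ^ q / (1 + t²) ^ p` over a bounded interval. This function is dominated by
`(1 + t²) ^ (-(2p - q) / 2)`, which is integrable on `ℝ` exactly because `2p - q > 1`.
-/

noncomputable def Ubub (δ ξ x : ℝ) : ℝ := Real.log (2 * δ / (δ ^ 2 + (x - ξ) ^ 2))

lemma abs_rpow_le_one_add_sq_rpow {q : ℝ} (hq : 0 ≤ q) (t : ℝ) :
    |t| ^ q ≤ (1 + t ^ 2) ^ (q / 2) := by
  have habs : |t| ≤ √(1 + t ^ 2) := by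
    rw [← sqrt_sq_eq_abs]
    exact sqrt_le_sqrt (by linarith)
  calc |t| ^ q ≤ √(1 + t ^ 2) ^ q := rpow_le_rpow (abs_nonneg t) habs hq
    _ = (1 + t ^ 2) ^ (q / 2) := by
      rw [sqrt_eq_rpow, ← rpow_mul (by positivity)]
      ring_nf

lemma integrable_abs_rpow_div_one_add_sq_rpow {p q : ℝ} (hq : 0 ≤ q) (hpq : 1 < 2 * p - q) :
    Integrable (fun t : ℝ => |t| ^ q / (1 + t ^ 2) ^ p) := by
  refine (integrable_rpow_neg_one_add_norm_sq (by simpa using hpq)).mono'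
    (Measurable.aestronglyMeasurable (by fun_prop)) (ae_of_all _ fun t => ?_)
  have h1 : (0 : ℝ) < 1 + t ^ 2 := by positivity
  rw [norm_of_nonneg (by positivity), norm_eq_abs, sq_abs]
  calc |t| ^ q / (1 + t ^ 2) ^ p ≤ (1 + t ^ 2) ^ (q / 2) / (1 + t ^ 2) ^ p := by
        gcongr
        exact abs_rpow_le_one_add_sq_rpow hq t
    _ = (1 + t ^ 2) ^ (-(2 * p - q) / 2) := by
        rw [← rpow_sub h1]
        ring_nf

lemma intervalIntegral_le_integral_of_nonneg {f : ℝ → ℝ} (hf : Integrable f) (hf0 : 0 ≤ f)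
    (a b : ℝ) : ∫ x in a..b, f x ≤ ∫ x, f x := by
  rcases le_total a b with hab | hba
  · rw [intervalIntegral.integral_of_le hab]
    exact setIntegral_le_integral hf (ae_of_all _ hf0)
  · calc ∫ x in a..b, f x ≤ 0 := by
          rw [intervalIntegral.integral_symm b a, neg_nonpos]
          exact intervalIntegral.integral_nonneg_of_forall hba hf0
      _ ≤ ∫ x, f x := integral_nonneg hf0

lemma exp_mul_Ubub_add_mul_mul_abs_rpow {δ : ℝ} (hδ : 0 < δ) (p q ξ t : ℝ) :
    exp (p * Ubub δ ξ (ξ + δ * t)) * |δ * t| ^ q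
      = 2 ^ p * δ ^ (q - p) * (|t| ^ q / (1 + t ^ 2) ^ p) := by
  have h1 : (0 : ℝ) < 1 + t ^ 2 := by positivity
  have hbase : 2 * δ / (δ ^ 2 + (ξ + δ * t - ξ) ^ 2) = 2 / δ * (1 + t ^ 2)⁻¹ := by
    field_simp
    ring
  rw [Ubub, mul_comm p, ← rpow_def_of_pos (by positivity), hbase,
    mul_rpow (by positivity) (by positivity), div_rpow (by norm_num) hδ.le, inv_rpow h1.le,
    abs_mul, abs_of_pos hδ, mul_rpow hδ.le (abs_nonneg t), rpow_sub hδ]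
  field_simp

lemma integral_exp_mul_Ubub_eq {δ : ℝ} (hδ : 0 < δ) (p q ξ a : ℝ) :
    ∫ x in (ξ - a)..(ξ + a), exp (p * Ubub δ ξ x) * |x - ξ| ^ q
      = 2 ^ p * δ ^ (q - p + 1) * ∫ t in (-a / δ)..(a / δ), |t| ^ q / (1 + t ^ 2) ^ p := by
  have hδ' := hδ.ne'
  calc ∫ x in (ξ - a)..(ξ + a), exp (p * Ubub δ ξ x) * |x - ξ| ^ q
      = ∫ u in (-a)..a, exp (p * Ubub δ ξ (ξ + u)) * |u| ^ q := by
        have hshift := intervalIntegral.integral_comp_add_left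
          (fun x => exp (p * Ubub δ ξ x) * |x - ξ| ^ q) ξ (a := -a) (b := a)
        simp only [add_sub_cancel_left] at hshift
        rw [hshift, sub_eq_add_neg]
    _ = δ * ∫ t in (-a / δ)..(a / δ), exp (p * Ubub δ ξ (ξ + δ * t)) * |δ * t| ^ q := by
        rw [intervalIntegral.integral_comp_mul_left
          (fun u => exp (p * Ubub δ ξ (ξ + u)) * |u| ^ q) hδ', smul_eq_mul,
          mul_inv_cancel_left₀ hδ', mul_div_cancel₀ _ hδ', mul_div_cancel₀ _ hδ']
    _ = 2 ^ p * δ ^ (q - p + 1) * ∫ t in (-a / δ)..(a / δ), |t| ^ q / (1 + t ^ 2) ^ p := by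
        simp only [exp_mul_Ubub_add_mul_mul_abs_rpow hδ, intervalIntegral.integral_const_mul,
          rpow_add hδ, rpow_one]
        ring

theorem bubble_integral_estimate_high_general (p q η : ℝ) (hq : 0 ≤ q)
    (hpq : 1 < 2 * p - q) :
    ∃ C > 0, ∃ δ₀ > 0, ∀ δ ∈ Set.Ioo (0:ℝ) δ₀, ∀ ξ : ℝ,
      (∫ x in (ξ - η / 2)..(ξ + η / 2), Real.exp (p * Ubub δ ξ x) * |x - ξ| ^ q)
        ≤ C * δ ^ (q - p + 1) := by
  set K := max (∫ t : ℝ, |t| ^ q / (1 + t ^ 2) ^ p) 1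
  refine ⟨2 ^ p * K, by positivity, 1, one_pos, fun δ ⟨hδ, _⟩ ξ => ?_⟩
  have hbound : ∫ t : ℝ in (-(η / 2) / δ)..(η / 2 / δ), |t| ^ q / (1 + t ^ 2) ^ p ≤ K :=
    (intervalIntegral_le_integral_of_nonneg (integrable_abs_rpow_div_one_add_sq_rpow hq hpq)
      (fun t => by positivity) _ _).trans (le_max_left _ _)
  rw [integral_exp_mul_Ubub_eq hδ, mul_right_comm]
  gcongr

theorem bubble_integral_estimate_high (p q η : ℝ) (hp : 0 ≤ p) (hq : 0 ≤ q)
    (hpq : 1 < 2 * p - q) (hη : 0 < η) :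
    ∃ C > 0, ∃ δ₀ > 0, ∀ δ ∈ Set.Ioo (0:ℝ) δ₀, ∀ ξ : ℝ,
      (∫ x in (ξ - η / 2)..(ξ + η / 2), Real.exp (p * Ubub δ ξ x) * |x - ξ| ^ q)
        ≤ C * δ ^ (q - p + 1) :=
  bubble_integral_estimate_high_general p q η hq hpq
end

section
/- Let p ≥ 0, q ≥ 0 with 2p - q < 1, and let U_{δ,ξ}(x) = log(2δ/(δ² + (x-ξ)²)). Then there exist constants C > 0 and δ₀ > 0 (depending only on p, q, η) such that for all δ ∈ (0, δ₀) and all ξ ∈ ℝ, ∫_{ξ-η/2}^{ξ+η/2} e^{p U_{δ,ξ}(x)} |x-ξ|^q dx ≤ C δ^{p}. -/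
open Real MeasureTheory

open Set intervalIntegral

/-!
Dropping `δ²` from the denominator gives `e^{p U_{δ,ξ}(x)} ≤ (2δ)^p |x - ξ|^{-2p}`, so the
integrand is at most `(2δ)^p |x - ξ|^{q - 2p}`, and `2p - q < 1` makes this power integrable near
`ξ`: its integral over `[ξ - η/2, ξ + η/2]` is `2 (η/2)^{r+1} / (r+1)` with `r = q - 2p > -1`.
-/

namespace Function.Even

variable {E : Type*} [NormedAddCommGroup E] {f : ℝ → E}

lemma intervalIntegrable_neg_left (hf : f.Even) {a : ℝ} (h : IntervalIntegrable f volume 0 a) :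
    IntervalIntegrable f volume (-a) 0 := by
  rw [IntervalIntegrable.iff_comp_neg, neg_neg, neg_zero]
  simpa only [hf _] using h.symm

lemma intervalIntegral_neg_self [NormedSpace ℝ E] (hf : f.Even) {a : ℝ}
    (h : IntervalIntegrable f volume 0 a) :
    ∫ x in -a..a, f x = (2 : ℝ) • ∫ x in 0..a, f x := by
  have hneg : ∫ x in -a..0, f x = ∫ x in 0..a, f x := by
    simpa only [hf _, neg_zero] using (integral_comp_neg (a := 0) (b := a) f).symm
  rw [← integral_add_adjacent_intervals (hf.intervalIntegrable_neg_left h) h, hneg, two_smul]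

end Function.Even

lemma intervalIntegrable_abs_rpow_zero_left {r : ℝ} (hr : -1 < r) {a : ℝ} (ha : 0 ≤ a) :
    IntervalIntegrable (fun t : ℝ => |t| ^ r) volume 0 a := by
  refine (intervalIntegrable_rpow' hr).congr_uIoo fun t ht => ?_
  rw [uIoo_of_le ha] at ht
  simp only [abs_of_pos ht.1]

lemma integral_abs_rpow_zero_left {r : ℝ} (hr : -1 < r) {a : ℝ} (ha : 0 ≤ a) :
    ∫ t in 0..a, |t| ^ r = a ^ (r + 1) / (r + 1) := by
  have h := integral_rpow (a := 0) (b := a) (Or.inl hr)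
  rw [zero_rpow (by linarith), sub_zero] at h
  rw [← h]
  refine integral_congr fun t ht => ?_
  rw [uIcc_of_le ha] at ht
  simp only [abs_of_nonneg ht.1]

lemma Ubub_eq_sub (δ ξ x : ℝ) : Ubub δ ξ x = Ubub δ 0 (x - ξ) := by
  simp only [Ubub, sub_zero]

lemma exp_mul_Ubub {δ : ℝ} (hδ : 0 < δ) (p ξ x : ℝ) :
    exp (p * Ubub δ ξ x) = (2 * δ / (δ ^ 2 + (x - ξ) ^ 2)) ^ p := by
  rw [rpow_def_of_pos (by positivity), mul_comm, Ubub]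

lemma exp_mul_Ubub_mul_abs_rpow_le {δ p : ℝ} (hδ : 0 < δ) (hp : 0 ≤ p) (q : ℝ) {t : ℝ}
    (ht : t ≠ 0) :
    exp (p * Ubub δ 0 t) * |t| ^ q ≤ (2 * δ) ^ p * |t| ^ (q - 2 * p) := by
  have habs : 0 < |t| := abs_pos.mpr ht
  have hsq : (t ^ 2) ^ p = |t| ^ (2 * p) := by
    rw [← sq_abs, ← rpow_natCast, ← rpow_mul habs.le, Nat.cast_ofNat]
  calc exp (p * Ubub δ 0 t) * |t| ^ q
      ≤ (2 * δ / t ^ 2) ^ p * |t| ^ q := by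
        rw [exp_mul_Ubub hδ, sub_zero]
        gcongr
        linarith [sq_nonneg δ]
    _ = (2 * δ) ^ p * |t| ^ (q - 2 * p) := by
        rw [div_rpow (by positivity) (by positivity), hsq, rpow_sub habs]
        ring

lemma integral_exp_mul_Ubub_mul_abs_rpow_le {δ p q : ℝ} (hδ : 0 < δ) (hp : 0 ≤ p)
    (hpq : -1 < q - 2 * p) {a : ℝ} (ha : 0 ≤ a) :
    ∫ t in -a..a, exp (p * Ubub δ 0 t) * |t| ^ q
      ≤ (2 * δ) ^ p * (2 * (a ^ (q - 2 * p + 1) / (q - 2 * p + 1))) := by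
  have hEven : Function.Even fun t : ℝ => |t| ^ (q - 2 * p) := fun t => by simp only [abs_neg]
  have hint := intervalIntegrable_abs_rpow_zero_left hpq ha
  have hbound : IntervalIntegrable (fun t => (2 * δ) ^ p * |t| ^ (q - 2 * p)) volume (-a) a :=
    ((hEven.intervalIntegrable_neg_left hint).trans hint).const_mul _
  calc ∫ t in -a..a, exp (p * Ubub δ 0 t) * |t| ^ q
      ≤ ∫ t in -a..a, (2 * δ) ^ p * |t| ^ (q - 2 * p) := by
        rw [integral_of_le (by linarith), integral_of_le (by linarith)]
        refine integral_mono_of_nonneg (ae_of_all _ fun t => by positivity) hbound.1 ?_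
        filter_upwards [ae_restrict_of_ae (volume.ae_ne 0)] with t ht
        exact exp_mul_Ubub_mul_abs_rpow_le hδ hp q ht
    _ = (2 * δ) ^ p * (2 * (a ^ (q - 2 * p + 1) / (q - 2 * p + 1))) := by
        rw [intervalIntegral.integral_const_mul, hEven.intervalIntegral_neg_self hint, smul_eq_mul,
          integral_abs_rpow_zero_left hpq ha]

theorem bubble_integral_estimate_low_general (p q η : ℝ) (hp : 0 ≤ p)
    (hpq : 2 * p - q < 1) (hη : 0 < η) :
    ∃ C > 0, ∃ δ₀ > 0, ∀ δ ∈ Set.Ioo (0:ℝ) δ₀, ∀ ξ : ℝ,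
      (∫ x in (ξ - η / 2)..(ξ + η / 2), Real.exp (p * Ubub δ ξ x) * |x - ξ| ^ q)
        ≤ C * δ ^ p := by
  have hr : -1 < q - 2 * p := by linarith
  have hr1 : 0 < q - 2 * p + 1 := by linarith
  refine ⟨2 ^ p * (2 * ((η / 2) ^ (q - 2 * p + 1) / (q - 2 * p + 1))), by positivity, 1, one_pos,
    fun δ hδ ξ => ?_⟩
  have hcentre : ∫ x in (ξ - η / 2)..(ξ + η / 2), exp (p * Ubub δ ξ x) * |x - ξ| ^ q
      = ∫ t in -(η / 2)..(η / 2), exp (p * Ubub δ 0 t) * |t| ^ q := by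
    simp only [Ubub_eq_sub δ ξ]
    rw [integral_comp_sub_right (fun t => exp (p * Ubub δ 0 t) * |t| ^ q)]
    ring_nf
  rw [hcentre, mul_right_comm, ← mul_rpow zero_le_two hδ.1.le]
  exact integral_exp_mul_Ubub_mul_abs_rpow_le hδ.1 hp hr (by positivity)

theorem bubble_integral_estimate_low (p q η : ℝ) (hp : 0 ≤ p) (hq : 0 ≤ q)
    (hpq : 2 * p - q < 1) (hη : 0 < η) :
    ∃ C > 0, ∃ δ₀ > 0, ∀ δ ∈ Set.Ioo (0:ℝ) δ₀, ∀ ξ : ℝ,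
      (∫ x in (ξ - η / 2)..(ξ + η / 2), Real.exp (p * Ubub δ ξ x) * |x - ξ| ^ q)
        ≤ C * δ ^ p :=
  bubble_integral_estimate_low_general p q η hp hpq hη
end

section
/- Let k ≥ 2 and -1 < ξ₁ < ξ₂ < … < ξ_k < 1. Then ∑_{i≠j} (-1)^{i+j} G(ξ_i, ξ_j) ≤ 0, where G(a,b) = (1/π) log((1 - ab + √((1-a²)(1-b²)))/|a-b|). -/
/-!
Writing `a = (1 - s²) / (1 + s²)` with `s = tan (arccos a / 2) > 0` turns the kernel into
`G(a, b) = (1/π) log ((s + t) / |s - t|)`. Hence `G(a, ·)` is nonnegative, increasing on `(-1, a)`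
and decreasing on `(a, 1)`. In row `i` of the sum, the terms with `j > i` and those with `j < i`
therefore form two alternating sums with terms decreasing away from the diagonal, each starting
with the sign `-1` at `j = i ± 1`; both are `≤ 0`, and summing over the rows gives the claim.
-/

open Real Finset

noncomputable def greenG (a b : ℝ) : ℝ :=
  (1 / π) * Real.log ((1 - a * b + Real.sqrt ((1 - a ^ 2) * (1 - b ^ 2))) / |b - a|)

-- `|a - a| = 0` and Lean's `x / 0 = 0`, `log 0 = 0`; this lets the diagonal join the sum.
theorem greenG_self (a : ℝ) : greenG a a = 0 := by
  simp [greenG]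

theorem greenG_one_sub_sq_div_one_add_sq {s t : ℝ} (hs : 0 ≤ s) (ht : 0 ≤ t) :
    greenG ((1 - s ^ 2) / (1 + s ^ 2)) ((1 - t ^ 2) / (1 + t ^ 2)) =
      (1 / π) * log ((s + t) / |s - t|) := by
  have hD : 0 < (1 + s ^ 2) * (1 + t ^ 2) := by positivity
  have hsqrt : √((1 - ((1 - s ^ 2) / (1 + s ^ 2)) ^ 2) * (1 - ((1 - t ^ 2) / (1 + t ^ 2)) ^ 2)) =
      4 * s * t / ((1 + s ^ 2) * (1 + t ^ 2)) := by
    rw [← Real.sqrt_sq (by positivity : 0 ≤ 4 * s * t / ((1 + s ^ 2) * (1 + t ^ 2)))]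
    congr 1
    field_simp
    ring
  have hnum : 1 - (1 - s ^ 2) / (1 + s ^ 2) * ((1 - t ^ 2) / (1 + t ^ 2)) +
      4 * s * t / ((1 + s ^ 2) * (1 + t ^ 2)) = 2 * (s + t) ^ 2 / ((1 + s ^ 2) * (1 + t ^ 2)) := by
    field_simp
    ring
  have hden : (1 - t ^ 2) / (1 + t ^ 2) - (1 - s ^ 2) / (1 + s ^ 2) =
      2 * (s + t) * (s - t) / ((1 + s ^ 2) * (1 + t ^ 2)) := by
    field_simp
    ring
  rw [greenG, hsqrt, hnum, hden]
  rcases eq_or_ne s t with rfl | hst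
  · simp
  have hst' : 0 < s + t := by rcases hst.lt_or_gt with h | h <;> linarith
  rw [abs_div, abs_mul, abs_of_pos (by positivity : (0 : ℝ) < 2 * (s + t)), abs_of_pos hD]
  field_simp

/-- `tan (arccos a / 2)`, the inverse of `s ↦ (1 - s²) / (1 + s²)` on `(-1, 1)`. -/
noncomputable def tanHalfArccos (a : ℝ) : ℝ :=
  √((1 - a) / (1 + a))

theorem tanHalfArccos_pos {a : ℝ} (ha : a ∈ Set.Ioo (-1) 1) : 0 < tanHalfArccos a :=
  Real.sqrt_pos.2 (div_pos (by linarith [ha.2]) (by linarith [ha.1]))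

theorem strictAntiOn_tanHalfArccos : StrictAntiOn tanHalfArccos (Set.Ioo (-1) 1) := by
  intro a ha b hb hab
  have ha' : 0 < 1 + a := by linarith [ha.1]
  have hb' : 0 < 1 + b := by linarith [hb.1]
  refine Real.sqrt_lt_sqrt (div_nonneg (by linarith [hb.2]) hb'.le) ?_
  rw [div_lt_div_iff₀ hb' ha']
  linarith

theorem one_sub_sq_div_one_add_sq_tanHalfArccos {a : ℝ} (ha : a ∈ Set.Ioo (-1) 1) :
    (1 - tanHalfArccos a ^ 2) / (1 + tanHalfArccos a ^ 2) = a := by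
  have ha' : 0 < 1 + a := by linarith [ha.1]
  rw [tanHalfArccos, sq_sqrt (div_nonneg (by linarith [ha.2]) ha'.le)]
  field_simp
  ring

theorem greenG_eq_log_tanHalfArccos {a b : ℝ} (ha : a ∈ Set.Ioo (-1) 1)
    (hb : b ∈ Set.Ioo (-1) 1) :
    greenG a b = (1 / π) * log ((tanHalfArccos a + tanHalfArccos b) /
      |tanHalfArccos a - tanHalfArccos b|) := by
  conv_lhs => rw [← one_sub_sq_div_one_add_sq_tanHalfArccos ha,
    ← one_sub_sq_div_one_add_sq_tanHalfArccos hb]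
  exact greenG_one_sub_sq_div_one_add_sq (tanHalfArccos_pos ha).le (tanHalfArccos_pos hb).le

theorem one_le_add_div_abs_sub {s t : ℝ} (hs : 0 ≤ s) (ht : 0 ≤ t) (hst : s ≠ t) :
    1 ≤ (s + t) / |s - t| := by
  rw [one_le_div (abs_pos.2 (sub_ne_zero.2 hst)), abs_sub_le_iff]
  constructor <;> linarith

theorem monotoneOn_log_add_div_abs_sub (s : ℝ) :
    MonotoneOn (fun t ↦ log ((s + t) / |s - t|)) (Set.Ico 0 s) := by
  intro t ht t' ht' htt'
  have hst : 0 < s - t := sub_pos.2 ht.2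
  have hst' : 0 < s - t' := sub_pos.2 ht'.2
  simp only [abs_of_pos hst, abs_of_pos hst']
  refine log_le_log (div_pos (by linarith [ht.1]) hst) ?_
  rw [div_le_div_iff₀ hst hst']
  nlinarith [ht.1]

theorem antitoneOn_log_add_div_abs_sub {s : ℝ} (hs : 0 ≤ s) :
    AntitoneOn (fun t ↦ log ((s + t) / |s - t|)) (Set.Ioi s) := by
  intro t ht t' ht' htt'
  have hts : 0 < t - s := sub_pos.2 ht
  have hts' : 0 < t' - s := sub_pos.2 ht'
  simp only [abs_sub_comm s, abs_of_pos hts, abs_of_pos hts']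
  refine log_le_log (div_pos (by linarith [ht'.out]) hts') ?_
  rw [div_le_div_iff₀ hts' hts]
  nlinarith

theorem greenG_nonneg {a b : ℝ} (ha : a ∈ Set.Ioo (-1) 1) (hb : b ∈ Set.Ioo (-1) 1) :
    0 ≤ greenG a b := by
  rcases eq_or_ne a b with rfl | hab
  · rw [greenG_self]
  rw [greenG_eq_log_tanHalfArccos ha hb]
  exact mul_nonneg (by positivity) (log_nonneg (one_le_add_div_abs_sub
    (tanHalfArccos_pos ha).le (tanHalfArccos_pos hb).le
    (strictAntiOn_tanHalfArccos.injOn.ne ha hb hab)))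

theorem greenG_monotoneOn {a : ℝ} (ha : a ∈ Set.Ioo (-1) 1) :
    MonotoneOn (greenG a) (Set.Ioo (-1) a) := by
  intro b hb c hc hbc
  have hb' : b ∈ Set.Ioo (-1) 1 := ⟨hb.1, hb.2.trans ha.2⟩
  have hc' : c ∈ Set.Ioo (-1) 1 := ⟨hc.1, hc.2.trans ha.2⟩
  rw [greenG_eq_log_tanHalfArccos ha hb', greenG_eq_log_tanHalfArccos ha hc']
  exact mul_le_mul_of_nonneg_left (antitoneOn_log_add_div_abs_sub (tanHalfArccos_pos ha).le
    (strictAntiOn_tanHalfArccos hc' ha hc.2) (strictAntiOn_tanHalfArccos hb' ha hb.2)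
    (strictAntiOn_tanHalfArccos.antitoneOn hb' hc' hbc)) (by positivity)

theorem greenG_antitoneOn {a : ℝ} (ha : a ∈ Set.Ioo (-1) 1) :
    AntitoneOn (greenG a) (Set.Ioo a 1) := by
  intro b hb c hc hbc
  have hb' : b ∈ Set.Ioo (-1) 1 := ⟨ha.1.trans hb.1, hb.2⟩
  have hc' : c ∈ Set.Ioo (-1) 1 := ⟨ha.1.trans hc.1, hc.2⟩
  rw [greenG_eq_log_tanHalfArccos ha hb', greenG_eq_log_tanHalfArccos ha hc']
  exact mul_le_mul_of_nonneg_left (monotoneOn_log_add_div_abs_sub _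
    ⟨(tanHalfArccos_pos hc').le, strictAntiOn_tanHalfArccos ha hc' hc.1⟩
    ⟨(tanHalfArccos_pos hb').le, strictAntiOn_tanHalfArccos ha hb' hb.1⟩
    (strictAntiOn_tanHalfArccos.antitoneOn hb' hc' hbc)) (by positivity)

theorem sum_range_neg_one_pow_mul_nonneg {R : Type*} [CommRing R] [LinearOrder R]
    [IsStrictOrderedRing R] :
    ∀ {f : ℕ → R} {n : ℕ}, AntitoneOn f (Set.Iio n) → (∀ m < n, 0 ≤ f m) →
      0 ≤ ∑ m ∈ range n, (-1) ^ m * f m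
  | _, 0, _, _ => by simp
  | _, 1, _, hf₀ => by simpa using hf₀ 0 one_pos
  | f, n + 2, hf, hf₀ => by
    have htail : 0 ≤ ∑ m ∈ range n, (-1) ^ m * f (m + 2) :=
      sum_range_neg_one_pow_mul_nonneg
        (fun a ha b hb hab ↦
          hf (Nat.add_lt_add_right ha 2) (Nat.add_lt_add_right hb 2) (by omega))
        (fun m hm ↦ hf₀ _ (by omega))
    have hpair : f 1 ≤ f 0 := hf (by simp) (by simp) zero_le_one
    rw [sum_range_succ', sum_range_succ']
    simp only [pow_succ, pow_zero, mul_neg, mul_one, neg_neg, one_mul, zero_add, neg_mul]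
    linarith

theorem neg_one_pow_eq_neg_of_mod_two {R : Type*} [Monoid R] [HasDistribNeg R] {a m : ℕ}
    (h : a % 2 = (m + 1) % 2) : (-1 : R) ^ a = -(-1) ^ m := by
  rw [neg_one_pow_congr (n := m + 1) (by rw [Nat.even_iff, Nat.even_iff, h]), pow_succ, mul_neg_one]

theorem sum_range_neg_one_pow_add_mul_nonpos {R : Type*} [CommRing R] [LinearOrder R]
    [IsStrictOrderedRing R] {f : ℕ → R} {i n : ℕ} (hin : i < n)
    (hf₀ : ∀ j < n, 0 ≤ f j) (hfi : f i = 0) (hmono : MonotoneOn f (Set.Iio i))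
    (hanti : AntitoneOn f (Set.Ioo i n)) :
    ∑ j ∈ range n, (-1) ^ (i + j) * f j ≤ 0 := by
  have hsplit : ∑ j ∈ range n, (-1) ^ (i + j) * f j =
      ∑ j ∈ range i, (-1) ^ (i + j) * f j +
        ∑ m ∈ range (n - (i + 1)), (-1) ^ (i + (i + 1 + m)) * f (i + 1 + m) := by
    rw [range_eq_Ico, ← sum_Ico_consecutive _ (Nat.zero_le i) hin.le, ← range_eq_Ico,
      sum_eq_sum_Ico_succ_bot hin, hfi, mul_zero, zero_add, sum_Ico_eq_sum_range]
  have hlower : ∑ j ∈ range i, (-1) ^ (i + j) * f j =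
      -∑ m ∈ range i, (-1) ^ m * f (i - 1 - m) := by
    rw [← sum_range_reflect, ← sum_neg_distrib]
    refine sum_congr rfl fun m hm ↦ ?_
    rw [neg_one_pow_eq_neg_of_mod_two (m := m) ?_, neg_mul]
    simp only [mem_range] at hm
    omega
  have hupper : ∑ m ∈ range (n - (i + 1)), (-1) ^ (i + (i + 1 + m)) * f (i + 1 + m) =
      -∑ m ∈ range (n - (i + 1)), (-1) ^ m * f (i + 1 + m) := by
    rw [← sum_neg_distrib]
    refine sum_congr rfl fun m _ ↦ ?_
    rw [neg_one_pow_eq_neg_of_mod_two (m := m) ?_, neg_mul]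
    omega
  have hlower_nonneg : 0 ≤ ∑ m ∈ range i, (-1) ^ m * f (i - 1 - m) :=
    sum_range_neg_one_pow_mul_nonneg
      (fun a ha b hb hab ↦ hmono (by rw [Set.mem_Iio] at ha ⊢; omega)
        (by rw [Set.mem_Iio] at hb ⊢; omega) (by omega))
      (fun m hm ↦ hf₀ _ (by omega))
  have hupper_nonneg : 0 ≤ ∑ m ∈ range (n - (i + 1)), (-1) ^ m * f (i + 1 + m) :=
    sum_range_neg_one_pow_mul_nonneg
      (fun a ha b hb hab ↦ hanti (by rw [Set.mem_Iio] at ha; constructor <;> omega)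
        (by rw [Set.mem_Iio] at hb; constructor <;> omega) (by omega))
      (fun m hm ↦ hf₀ _ (by omega))
  rw [hsplit, hlower, hupper]
  linarith

theorem Fin.sum_neg_one_pow_add_mul_nonpos {R : Type*} [CommRing R] [LinearOrder R]
    [IsStrictOrderedRing R] {k : ℕ} {f : Fin k → R} {i : Fin k} (hf₀ : 0 ≤ f)
    (hfi : f i = 0) (hmono : MonotoneOn f (Set.Iio i)) (hanti : AntitoneOn f (Set.Ioi i)) :
    ∑ j : Fin k, (-1) ^ ((i : ℕ) + j) * f j ≤ 0 := by
  set g : ℕ → R := fun n ↦ if h : n < k then f ⟨n, h⟩ else 0 with hg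
  have hgf : ∀ j : Fin k, g j = f j := fun j ↦ dif_pos j.isLt
  calc ∑ j : Fin k, (-1) ^ ((i : ℕ) + j) * f j
        = ∑ j ∈ range k, (-1) ^ ((i : ℕ) + j) * g j := by
          simp only [← hgf]
          exact Fin.sum_univ_eq_sum_range (fun j ↦ (-1) ^ ((i : ℕ) + j) * g j) k
    _ ≤ 0 := by
      refine sum_range_neg_one_pow_add_mul_nonpos i.isLt (fun j hj ↦ ?_) (by rw [hgf, hfi])
        (fun a ha b hb hab ↦ ?_) (fun a ha b hb hab ↦ ?_)
      · simp only [hg, dif_pos hj]; exact hf₀ _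
      · have ha' : a < k := ha.out.trans i.isLt
        have hb' : b < k := hb.out.trans i.isLt
        simp only [hg, dif_pos ha', dif_pos hb']
        exact hmono (show (⟨a, ha'⟩ : Fin k) < i from ha) hb hab
      · simp only [hg, dif_pos ha.2, dif_pos hb.2]
        exact hanti (show i < ⟨a, ha.2⟩ from ha.1) hb.1 hab

theorem alternating_green_sum_nonpos_general (k : ℕ) (ξ : Fin k → ℝ)
    (hmono : StrictMono ξ) (hmem : ∀ i, ξ i ∈ Set.Ioo (-1:ℝ) 1) :
    (∑ p ∈ (Finset.univ : Finset (Fin k)).offDiag,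
      (-1 : ℝ) ^ ((p.1 : ℕ) + (p.2 : ℕ)) * greenG (ξ p.1) (ξ p.2)) ≤ 0 := by
  have hdiag : ∑ p ∈ (univ : Finset (Fin k)).offDiag,
      (-1 : ℝ) ^ ((p.1 : ℕ) + (p.2 : ℕ)) * greenG (ξ p.1) (ξ p.2) =
        ∑ i : Fin k, ∑ j : Fin k, (-1 : ℝ) ^ ((i : ℕ) + j) * greenG (ξ i) (ξ j) := by
    rw [← sum_product']
    refine sum_subset (fun p _ ↦ mem_product.2 ⟨mem_univ _, mem_univ _⟩) fun p _ hp ↦ ?_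
    rw [show p.1 = p.2 by simpa using hp, greenG_self, mul_zero]
  rw [hdiag]
  refine sum_nonpos fun i _ ↦ Fin.sum_neg_one_pow_add_mul_nonpos
    (fun j ↦ greenG_nonneg (hmem i) (hmem j)) (greenG_self _) ?_ ?_
  · exact (greenG_monotoneOn (hmem i)).comp (hmono.monotone.monotoneOn _)
      fun j hj ↦ ⟨(hmem j).1, hmono hj⟩
  · exact (greenG_antitoneOn (hmem i)).comp_MonotoneOn (hmono.monotone.monotoneOn _)
      fun j hj ↦ ⟨hmono hj, (hmem j).2⟩

theorem alternating_green_sum_nonpos (k : ℕ) (hk : 2 ≤ k) (ξ : Fin k → ℝ)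
    (hmono : StrictMono ξ) (hmem : ∀ i, ξ i ∈ Set.Ioo (-1:ℝ) 1) :
    (∑ p ∈ (Finset.univ : Finset (Fin k)).offDiag,
      (-1 : ℝ) ^ ((p.1 : ℕ) + (p.2 : ℕ)) * greenG (ξ p.1) (ξ p.2)) ≤ 0 :=
  alternating_green_sum_nonpos_general k ξ hmono hmem
end

section
/- Let -1 < ξ₁ < … < ξ_k < 1 and u₀(x) = ∑_{i=1}^k (-1)^{i-1} G(ξ_i, x) for x ∈ (-1,1) \ {ξ₁,…,ξ_k}. Set ξ₀ = -1, ξ_{k+1} = 1. Then there exists a constant c > 0 (depending on k and the ξ_i) such that for every j ∈ {0,…,k} and every x ∈ (ξ_j, ξ_{j+1}), (-1)^j u₀'(x) √(1-x²) ≥ c. In particular u₀ is strictly monotone on each interval (ξ_j, ξ_{j+1}). -/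
/-!
With `greenSlope a x = √(1 - a²) / (a - x)` one has `π √(1 - x²) ∂ₓ G(a, x) = greenSlope a x`,
so on `(ξ_j, ξ_{j+1})` the quantity `(-1)^j π √(1 - x²) u₀'(x)` is the sum of two alternating
sums of values `greenSlope ξ_i x`: one over the nodes left of `x`, read from `x` outwards, and one
over the nodes right of `x`. As `a ↦ greenSlope a x` decreases on `[-1, x)` and on `(x, 1]` and
vanishes at `±1`, the terms of each sum decrease in absolute value, so each sum is nonnegative and
at least its first term minus its second. The bound
`greenSlope a x - greenSlope b x ≥ (b - a)(1 - |b|)/8` for `-1 ≤ a < b < x ≤ 1` (and its mirror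
image) bounds that difference below independently of `x`.
-/

open Real Finset

noncomputable def greenSlope (a y : ℝ) : ℝ := √(1 - a ^ 2) / (a - y)

@[simp] lemma greenSlope_neg_one (y : ℝ) : greenSlope (-1) y = 0 := by simp [greenSlope]

@[simp] lemma greenSlope_one (y : ℝ) : greenSlope 1 y = 0 := by simp [greenSlope]

lemma greenSlope_neg (a y : ℝ) : greenSlope (-a) (-y) = -greenSlope a y := by
  rw [greenSlope, greenSlope, neg_sq, neg_sub_neg, ← neg_sub a y, div_neg]

lemma hasDerivAt_greenG {a x : ℝ} (ha : a ∈ Set.Icc (-1) 1) (hx : x ∈ Set.Ioo (-1) 1)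
    (hxa : x ≠ a) : HasDerivAt (greenG a) (greenSlope a x / (π * √(1 - x ^ 2))) x := by
  have hs : √(1 - a ^ 2) ^ 2 = 1 - a ^ 2 := sq_sqrt (by nlinarith [ha.1, ha.2])
  have ht : √(1 - x ^ 2) ^ 2 = 1 - x ^ 2 := sq_sqrt (by nlinarith [hx.1, hx.2])
  have ht₀ : 0 < √(1 - x ^ 2) := sqrt_pos.2 (by nlinarith [hx.1, hx.2])
  have hA : ∀ y ∈ Set.Ioo (-1 : ℝ) 1, 0 < 1 - a * y + √(1 - a ^ 2) * √(1 - y ^ 2) :=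
    fun y hy => by
      have : a * y < 1 := by rcases le_total 0 y with h | h <;> nlinarith [hy.1, hy.2, ha.1, ha.2]
      positivity
  have hlocal : (fun y => (1 / π) * (log (1 - a * y + √(1 - a ^ 2) * √(1 - y ^ 2)) - log (y - a)))
      =ᶠ[nhds x] greenG a := by
    filter_upwards [(isOpen_Ioo.inter isOpen_ne).mem_nhds ⟨hx, hxa⟩] with y ⟨hy, hya⟩
    rw [greenG, sqrt_mul (by nlinarith [ha.1, ha.2]), log_div (hA y hy).ne'
      (abs_ne_zero.2 (sub_ne_zero.2 hya)), log_abs]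
  have hroot : HasDerivAt (fun y => √(1 - y ^ 2)) (-(2 * x) / (2 * √(1 - x ^ 2))) x := by
    simpa using ((hasDerivAt_pow 2 x).const_sub 1).sqrt (by nlinarith [hx.1, hx.2])
  have hlin : HasDerivAt (fun y => 1 - a * y) (-a) x := by
    simpa using ((hasDerivAt_id x).const_mul a).const_sub 1
  refine HasDerivAt.congr_of_eventuallyEq ?_ hlocal.symm
  refine ((((hlin.add (hroot.const_mul √(1 - a ^ 2))).log (hA x hx).ne').sub
    (((hasDerivAt_id x).sub_const a).log (sub_ne_zero.2 hxa))).const_mul (1 / π)).congr_deriv ?_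
  have hax : a - x ≠ 0 := sub_ne_zero.2 (Ne.symm hxa)
  have hxa' : x - a ≠ 0 := sub_ne_zero.2 hxa
  have hA₀ := (hA x hx).ne'
  simp only [Pi.add_apply, id_eq, greenSlope]
  field_simp
  linear_combination (a - x) * √(1 - x ^ 2) * hs - (a - x) * √(1 - a ^ 2) * ht

lemma hasDerivAt_sum_greenG {ι : Type*} (s : Finset ι) (w : ι → ℝ) {ξ : ι → ℝ} {y : ℝ}
    (hξ : ∀ i ∈ s, ξ i ∈ Set.Icc (-1) 1) (hy : y ∈ Set.Ioo (-1) 1) (hne : ∀ i ∈ s, y ≠ ξ i) :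
    HasDerivAt (fun x => ∑ i ∈ s, w i * greenG (ξ i) x)
      ((∑ i ∈ s, w i * greenSlope (ξ i) y) / (π * √(1 - y ^ 2))) y := by
  rw [sum_div]
  exact HasDerivAt.fun_sum fun i hi => by
    simpa only [mul_div_assoc] using (hasDerivAt_greenG (hξ i hi) hy (hne i hi)).const_mul (w i)

lemma le_greenSlope_sub_greenSlope_left {a b y : ℝ} (ha : -1 ≤ a) (hab : a < b) (hby : b < y)
    (hy : y ≤ 1) : (b - a) * (1 - |b|) / 8 ≤ greenSlope a y - greenSlope b y := by
  have hs : √(1 - a ^ 2) ^ 2 = 1 - a ^ 2 := sq_sqrt (by nlinarith)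
  have hσ : √(1 - b ^ 2) ^ 2 = 1 - b ^ 2 := sq_sqrt (by nlinarith)
  have hs₀ := sqrt_nonneg (1 - a ^ 2)
  have hσ₀ : 0 < √(1 - b ^ 2) := sqrt_pos.2 (by nlinarith)
  have hs₁ : √(1 - a ^ 2) ≤ 1 := sqrt_le_one.2 (by nlinarith)
  have hσ₁ : √(1 - b ^ 2) ≤ 1 := sqrt_le_one.2 (by nlinarith)
  have hb₁ : |b| ≤ 1 := abs_le.2 ⟨by linarith, by linarith⟩
  have hby' : b * y ≤ |b| := by
    rcases le_total 0 b with h | h <;> [rw [abs_of_nonneg h]; rw [abs_of_nonpos h]] <;> nlinarith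
  have hay : a * y ≤ 1 := by rcases le_total 0 y with h | h <;> nlinarith
  set N := √(1 - b ^ 2) * (y - a) - √(1 - a ^ 2) * (y - b)
  set D := √(1 - b ^ 2) * (y - a) + √(1 - a ^ 2) * (y - b)
  -- Multiplying the numerator `N` of the difference by its conjugate `D` removes the roots.
  have hND : N * D = (b - a) * ((y - a) * (1 - b * y) + (y - b) * (1 - a * y)) := by
    linear_combination (y - a) ^ 2 * hσ - (y - b) ^ 2 * hs
  have hQ₀ : 0 ≤ (b - a) * (y - a) * (1 - |b|) :=
    mul_nonneg (mul_nonneg (by linarith) (by linarith)) (by linarith)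
  have hQ : (b - a) * (y - a) * (1 - |b|) ≤ N * D := by
    rw [hND]
    nlinarith [mul_le_mul_of_nonneg_left (show 1 - |b| ≤ 1 - b * y by linarith)
      (mul_nonneg (sub_nonneg.2 hab.le) (sub_nonneg.2 (hab.trans hby).le)),
      mul_nonneg (mul_nonneg (sub_nonneg.2 hab.le) (sub_nonneg.2 hby.le)) (sub_nonneg.2 hay)]
  have hD₀ : 0 < D :=
    add_pos_of_pos_of_nonneg (mul_pos hσ₀ (by linarith)) (mul_nonneg hs₀ (by linarith))
  have hN₀ : 0 ≤ N := nonneg_of_mul_nonneg_left (by linarith) hD₀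
  have hD₄ : D ≤ 4 := by nlinarith
  have hdiff : greenSlope a y - greenSlope b y = N / ((y - a) * (y - b)) := by
    have : a - y ≠ 0 := by linarith
    have : b - y ≠ 0 := by linarith
    have : y - a ≠ 0 := by linarith
    have : y - b ≠ 0 := by linarith
    rw [greenSlope, greenSlope]
    field_simp
    ring
  rw [hdiff, le_div_iff₀ (mul_pos (by linarith) (by linarith))]
  nlinarith [mul_le_mul_of_nonneg_left hD₄ hN₀,
    mul_le_mul_of_nonneg_left (show y - b ≤ 2 by linarith) hQ₀]

lemma le_greenSlope_sub_greenSlope_right {a b y : ℝ} (hy : -1 ≤ y) (hya : y < a) (hab : a < b)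
    (hb : b ≤ 1) : (b - a) * (1 - |a|) / 8 ≤ greenSlope a y - greenSlope b y := by
  have := le_greenSlope_sub_greenSlope_left (a := -b) (b := -a) (y := -y)
    (by linarith) (by linarith) (by linarith) (by linarith)
  rw [greenSlope_neg, greenSlope_neg, abs_neg] at this
  linarith

lemma antitoneOn_greenSlope_left {y : ℝ} (hy : y ≤ 1) :
    AntitoneOn (greenSlope · y) (Set.Ico (-1) y) := by
  intro a ha b hb hab
  rcases hab.eq_or_lt with rfl | hlt
  · rfl
  have hgap := le_greenSlope_sub_greenSlope_left ha.1 hlt hb.2 hy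
  have : |b| ≤ 1 := abs_le.2 ⟨by linarith [ha.1], by linarith [hb.2]⟩
  nlinarith

lemma antitoneOn_greenSlope_right {y : ℝ} (hy : -1 ≤ y) :
    AntitoneOn (greenSlope · y) (Set.Ioc y 1) := by
  intro a ha b hb hab
  rcases hab.eq_or_lt with rfl | hlt
  · rfl
  have hgap := le_greenSlope_sub_greenSlope_right hy ha.1 hlt hb.2
  have : |a| ≤ 1 := abs_le.2 ⟨by linarith [ha.1], by linarith [hb.2]⟩
  nlinarith

lemma antitoneOn_greenSlope_comp_Iic {ξ : ℕ → ℝ} {j : ℕ} {y : ℝ}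
    (hξ : MonotoneOn ξ (Set.Iic j)) (h0 : -1 ≤ ξ 0) (hj : ξ j < y) (hy : y ≤ 1) :
    AntitoneOn (fun i => greenSlope (ξ i) y) (Set.Iic j) :=
  (antitoneOn_greenSlope_left hy).comp_MonotoneOn hξ fun _ hi =>
    ⟨h0.trans (hξ (Nat.zero_le j) hi (Nat.zero_le _)),
      (hξ hi (Set.mem_Iic.2 le_rfl) hi).trans_lt hj⟩

lemma antitoneOn_greenSlope_comp_Icc {ξ : ℕ → ℝ} {p q : ℕ} {y : ℝ}
    (hξ : MonotoneOn ξ (Set.Icc p q)) (hq : ξ q ≤ 1) (hp : y < ξ p) (hy : -1 ≤ y) :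
    AntitoneOn (fun i => greenSlope (ξ i) y) (Set.Icc p q) :=
  (antitoneOn_greenSlope_right hy).comp_MonotoneOn hξ fun _ hi =>
    ⟨hp.trans_le (hξ ⟨le_rfl, hi.1.trans hi.2⟩ hi hi.1),
      (hξ hi ⟨hi.1.trans hi.2, le_rfl⟩ hi.2).trans hq⟩

lemma sum_range_alternating_mem_Icc (b : ℕ → ℝ) (n : ℕ) (hb : AntitoneOn b (Set.Iic n))
    (hn : 0 ≤ b n) : ∑ m ∈ range n, (-1) ^ m * b m ∈ Set.Icc 0 (b 0) := by
  induction n generalizing b with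
  | zero => simpa using hn
  | succ n ih =>
    have hshift : AntitoneOn (fun m => b (m + 1)) (Set.Iic n) := fun i hi j hj hij =>
      hb (Nat.succ_le_succ hi) (Nat.succ_le_succ hj) (Nat.succ_le_succ hij)
    obtain ⟨h₀, h₁⟩ := ih _ hshift hn
    have hb₁ : b 1 ≤ b 0 := hb (by simp) (by simp) zero_le_one
    rw [sum_range_succ']
    simp only [pow_succ, mul_neg_one, neg_mul, sum_neg_distrib, pow_zero, one_mul]
    constructor <;> linarith

lemma sub_le_sum_range_alternating (b : ℕ → ℝ) {n : ℕ} (hn₀ : n ≠ 0)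
    (hb : AntitoneOn b (Set.Iic n)) (hn : 0 ≤ b n) :
    b 0 - b 1 ≤ ∑ m ∈ range n, (-1) ^ m * b m := by
  obtain ⟨n, rfl⟩ := Nat.exists_eq_succ_of_ne_zero hn₀
  have hshift : AntitoneOn (fun m => b (m + 1)) (Set.Iic n) := fun i hi j hj hij =>
    hb (Nat.succ_le_succ hi) (Nat.succ_le_succ hj) (Nat.succ_le_succ hij)
  have := (sum_range_alternating_mem_Icc _ n hshift hn).2
  rw [sum_range_succ']
  simp only [pow_succ, mul_neg_one, neg_mul, sum_neg_distrib, pow_zero, one_mul]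
  linarith

lemma neg_one_pow_mul_sum_Icc_alternating (c : ℕ → ℝ) {j k : ℕ} (hjk : j ≤ k) :
    (-1) ^ j * ∑ i ∈ Icc 1 k, (-1) ^ (i - 1) * c i =
      ∑ m ∈ range j, (-1) ^ m * -c (j - m) + ∑ m ∈ range (k - j), (-1) ^ m * c (j + 1 + m) := by
  induction j with
  | zero =>
    rw [← Ico_add_one_right_eq_Icc, sum_Ico_eq_sum_range]
    simp [add_comm]
  | succ j ih =>
    obtain ⟨n, hn⟩ : ∃ n, k - j = n + 1 := ⟨k - j - 1, by omega⟩
    rw [pow_succ, mul_comm _ (-1 : ℝ), mul_assoc, ih (by omega), hn, sum_range_succ',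
      sum_range_succ', show k - (j + 1) = n by omega]
    simp only [pow_succ, Nat.add_sub_add_right, Nat.sub_zero, pow_zero, add_assoc, add_comm 1]
    simp only [mul_neg_one, neg_mul, sum_neg_distrib]
    ring

lemma exists_pos_forall_le_of_finite {ι α : Type*} {s : Set ι} (hs : s.Finite)
    {T : ι → Set α} {F : ι → α → ℝ} (h : ∀ i ∈ s, ∃ δ > 0, ∀ x ∈ T i, δ ≤ F i x) :
    ∃ c > 0, ∀ i ∈ s, ∀ x ∈ T i, c ≤ F i x := by
  have hev : ∀ i ∈ s, ∀ᶠ c in nhdsWithin (0 : ℝ) (Set.Ioi 0), ∀ x ∈ T i, c ≤ F i x := by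
    intro i hi
    obtain ⟨δ, hδ, hF⟩ := h i hi
    filter_upwards [nhdsWithin_le_nhds (Iic_mem_nhds hδ)] with c hc x hx using hc.trans (hF x hx)
  obtain ⟨c, hc, hc₀⟩ := (((Filter.eventually_all_finite hs).2 hev).and self_mem_nhdsWithin).exists
  exact ⟨c, hc₀, hc⟩

lemma mem_Icc_of_strictMonoOn {k : ℕ} {ξ : ℕ → ℝ} (hξ : StrictMonoOn ξ (Set.Iic (k + 1)))
    (h0 : ξ 0 = -1) (hk1 : ξ (k + 1) = 1) {i : ℕ} (hi : i ≤ k + 1) : ξ i ∈ Set.Icc (-1) 1 := by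
  rw [← h0, ← hk1]
  exact ⟨hξ.monotoneOn (Nat.zero_le _) hi (Nat.zero_le i),
    hξ.monotoneOn hi (Set.mem_Iic.2 le_rfl) hi⟩

lemma mem_Ioo_of_strictMonoOn {k : ℕ} {ξ : ℕ → ℝ} (hξ : StrictMonoOn ξ (Set.Iic (k + 1)))
    (h0 : ξ 0 = -1) (hk1 : ξ (k + 1) = 1) {i : ℕ} (hi₀ : 0 < i) (hi : i ≤ k) :
    ξ i ∈ Set.Ioo (-1) 1 := by
  rw [← h0, ← hk1]
  exact ⟨hξ (Nat.zero_le _) (Set.mem_Iic.2 (by omega)) hi₀,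
    hξ (Set.mem_Iic.2 (by omega)) (Set.mem_Iic.2 le_rfl) (by omega)⟩

lemma ne_of_mem_Ioo_of_strictMonoOn {k j : ℕ} {ξ : ℕ → ℝ}
    (hξ : StrictMonoOn ξ (Set.Iic (k + 1))) (hj : j ≤ k) {y : ℝ}
    (hy : y ∈ Set.Ioo (ξ j) (ξ (j + 1))) {i : ℕ} (hi : i ≤ k + 1) : y ≠ ξ i := by
  rcases le_or_gt i j with h | h
  · exact (hy.1.trans_le' (hξ.monotoneOn (Set.mem_Iic.2 (by omega))
      (Set.mem_Iic.2 (by omega)) h)).ne'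
  · exact (hy.2.trans_le (hξ.monotoneOn (Set.mem_Iic.2 (by omega)) (Set.mem_Iic.2 hi) h)).ne

lemma mem_Ioo_of_mem_Ioo_nodes {k j : ℕ} {ξ : ℕ → ℝ} (hξ : StrictMonoOn ξ (Set.Iic (k + 1)))
    (h0 : ξ 0 = -1) (hk1 : ξ (k + 1) = 1) (hj : j ≤ k) {y : ℝ}
    (hy : y ∈ Set.Ioo (ξ j) (ξ (j + 1))) : y ∈ Set.Ioo (-1) 1 :=
  ⟨(mem_Icc_of_strictMonoOn hξ h0 hk1 (i := j) (by omega)).1.trans_lt hy.1,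
    hy.2.trans_le (mem_Icc_of_strictMonoOn hξ h0 hk1 (i := j + 1) (by omega)).2⟩

noncomputable def profileSlope (k : ℕ) (ξ : ℕ → ℝ) (y : ℝ) : ℝ :=
  ∑ i ∈ Icc 1 k, (-1) ^ (i - 1) * greenSlope (ξ i) y

lemma hasDerivAt_alternating_sum_greenG {k j : ℕ} {ξ : ℕ → ℝ}
    (hξ : StrictMonoOn ξ (Set.Iic (k + 1))) (h0 : ξ 0 = -1) (hk1 : ξ (k + 1) = 1) (hj : j ≤ k)
    {y : ℝ} (hy : y ∈ Set.Ioo (ξ j) (ξ (j + 1))) :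
    HasDerivAt (fun x => ∑ i ∈ Icc 1 k, (-1 : ℝ) ^ (i - 1) * greenG (ξ i) x)
      (profileSlope k ξ y / (π * √(1 - y ^ 2))) y :=
  hasDerivAt_sum_greenG _ _ (fun _ hi => mem_Icc_of_strictMonoOn hξ h0 hk1 (by simp at hi; omega))
    (mem_Ioo_of_mem_Ioo_nodes hξ h0 hk1 hj hy)
    fun _ hi => ne_of_mem_Ioo_of_strictMonoOn hξ hj hy (by simp at hi; omega)

lemma neg_one_pow_mul_profileSlope_ge {k j : ℕ} {ξ : ℕ → ℝ}
    (hξ : StrictMonoOn ξ (Set.Iic (k + 1))) (h0 : ξ 0 = -1) (hk1 : ξ (k + 1) = 1) (hjk : j ≤ k)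
    {y : ℝ} (hy : y ∈ Set.Ioo (ξ j) (ξ (j + 1))) :
    (0 < j → (ξ j - ξ (j - 1)) * (1 - |ξ j|) / 8 ≤ (-1) ^ j * profileSlope k ξ y) ∧
      (j < k →
        (ξ (j + 2) - ξ (j + 1)) * (1 - |ξ (j + 1)|) / 8 ≤ (-1) ^ j * profileSlope k ξ y) := by
  have hmono := hξ.monotoneOn
  have hnode {i : ℕ} (hi : i ≤ k + 1) := mem_Icc_of_strictMonoOn hξ h0 hk1 hi
  have hy₀ : -1 ≤ y := (hnode (i := j) (by omega)).1.trans hy.1.le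
  have hy₁ : y ≤ 1 := hy.2.le.trans (hnode (i := j + 1) (by omega)).2
  have hleft := antitoneOn_greenSlope_comp_Iic (hmono.mono (Set.Iic_subset_Iic.2 (by omega)))
    h0.ge hy.1 hy₁
  have hright := antitoneOn_greenSlope_comp_Icc (hmono.mono fun i hi => hi.2) hk1.le hy.2 hy₀
  have hL : AntitoneOn (fun m => -greenSlope (ξ (j - m)) y) (Set.Iic j) :=
    fun m _ m' _ hmm' => neg_le_neg (hleft (Nat.sub_le _ _) (Nat.sub_le _ _) (by omega))
  have hR : AntitoneOn (fun m => greenSlope (ξ (j + 1 + m)) y) (Set.Iic (k - j)) :=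
    fun m hm m' hm' hmm' => hright ⟨by omega, by simp at hm; omega⟩
      ⟨by omega, by simp at hm'; omega⟩ (by omega)
  have hL₀ : 0 ≤ -greenSlope (ξ (j - j)) y := by simp [h0]
  have hR₀ : 0 ≤ greenSlope (ξ (j + 1 + (k - j))) y := by
    simp [show j + 1 + (k - j) = k + 1 by omega, hk1]
  have hLsum := sum_range_alternating_mem_Icc _ j hL hL₀
  have hRsum := sum_range_alternating_mem_Icc _ (k - j) hR hR₀
  rw [profileSlope, neg_one_pow_mul_sum_Icc_alternating (fun i => greenSlope (ξ i) y) hjk]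
  constructor
  · intro hj
    have hgap := le_greenSlope_sub_greenSlope_left (hnode (i := j - 1) (by omega)).1
      (hξ (Set.mem_Iic.2 (by omega)) (Set.mem_Iic.2 (by omega)) (by omega : j - 1 < j)) hy.1 hy₁
    have := sub_le_sum_range_alternating _ hj.ne' hL hL₀
    simp only [Nat.sub_zero] at this
    linarith [hRsum.1]
  · intro hj
    have hgap := le_greenSlope_sub_greenSlope_right hy₀ hy.2
      (hξ (Set.mem_Iic.2 (by omega)) (Set.mem_Iic.2 (by omega)) (by omega : j + 1 < j + 2))
      (hnode (by omega)).2
    have := sub_le_sum_range_alternating _ (by omega : k - j ≠ 0) hR hR₀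
    simp only [add_zero] at this
    linarith [hLsum.1]

lemma exists_pos_le_neg_one_pow_mul_profileSlope {k j : ℕ} {ξ : ℕ → ℝ} (hk : 1 ≤ k)
    (hξ : StrictMonoOn ξ (Set.Iic (k + 1))) (h0 : ξ 0 = -1) (hk1 : ξ (k + 1) = 1) (hjk : j ≤ k) :
    ∃ δ > 0, ∀ y ∈ Set.Ioo (ξ j) (ξ (j + 1)), δ ≤ (-1) ^ j * profileSlope k ξ y := by
  have hnode {i : ℕ} (hi₀ : 0 < i) (hi : i ≤ k) : 0 < 1 - |ξ i| :=
    sub_pos.2 (abs_lt.2 (mem_Ioo_of_strictMonoOn hξ h0 hk1 hi₀ hi))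
  rcases Nat.eq_zero_or_pos j with rfl | hj
  · refine ⟨(ξ 2 - ξ 1) * (1 - |ξ 1|) / 8, ?_,
      fun y hy => (neg_one_pow_mul_profileSlope_ge hξ h0 hk1 hjk hy).2 hk⟩
    have : ξ 1 < ξ 2 := hξ (Set.mem_Iic.2 (by omega)) (Set.mem_Iic.2 (by omega)) one_lt_two
    have := hnode one_pos hk
    positivity
  · refine ⟨(ξ j - ξ (j - 1)) * (1 - |ξ j|) / 8, ?_,
      fun y hy => (neg_one_pow_mul_profileSlope_ge hξ h0 hk1 hjk hy).1 hj⟩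
    have : ξ (j - 1) < ξ j := hξ (Set.mem_Iic.2 (by omega)) (Set.mem_Iic.2 (by omega)) (by omega)
    have := hnode hj hjk
    positivity
theorem limit_profile_monotone (k : ℕ) (hk : 1 ≤ k) (ξ : ℕ → ℝ)
    (h0 : ξ 0 = -1) (hk1 : ξ (k + 1) = 1)
    (hord : ∀ i ≤ k, ξ i < ξ (i + 1)) :
    ∃ c > 0, ∀ j ≤ k, ∀ x ∈ Set.Ioo (ξ j) (ξ (j + 1)),
      (c ≤ (-1 : ℝ) ^ j *
          deriv (fun y => ∑ i ∈ Finset.Icc 1 k, (-1 : ℝ) ^ (i - 1) * greenG (ξ i) y) x *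
          Real.sqrt (1 - x ^ 2)) ∧
      StrictMonoOn
        (fun y => (-1 : ℝ) ^ j * ∑ i ∈ Finset.Icc 1 k, (-1 : ℝ) ^ (i - 1) * greenG (ξ i) y)
        (Set.Ioo (ξ j) (ξ (j + 1))) := by
  have hξ : StrictMonoOn ξ (Set.Iic (k + 1)) :=
    strictMonoOn_Iic_of_lt_succ fun i hi => hord i (Nat.lt_succ_iff.1 hi)
  obtain ⟨c, hc, hbound⟩ := exists_pos_forall_le_of_finite (Set.finite_Iic k)
    fun j hj => exists_pos_le_neg_one_pow_mul_profileSlope hk hξ h0 hk1 hj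
  refine ⟨c / π, by positivity, fun j hj x hx => ?_⟩
  have hderiv y (hy : y ∈ Set.Ioo (ξ j) (ξ (j + 1))) :=
    hasDerivAt_alternating_sum_greenG hξ h0 hk1 hj hy
  have hslope : ∀ y ∈ Set.Ioo (ξ j) (ξ (j + 1)),
      c / π ≤ (-1) ^ j * (profileSlope k ξ y / (π * √(1 - y ^ 2))) * √(1 - y ^ 2) := by
    intro y hy
    have hy' := mem_Ioo_of_mem_Ioo_nodes hξ h0 hk1 hj hy
    have ht : 0 < √(1 - y ^ 2) := sqrt_pos.2 (by nlinarith [hy'.1, hy'.2])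
    rw [show (-1) ^ j * (profileSlope k ξ y / (π * √(1 - y ^ 2))) * √(1 - y ^ 2) =
      (-1) ^ j * profileSlope k ξ y / π by field_simp]
    exact div_le_div_of_nonneg_right (hbound j hj y hy) pi_pos.le
  refine ⟨(hderiv x hx).deriv ▸ hslope x hx, ?_⟩
  refine strictMonoOn_of_hasDerivWithinAt_pos (convex_Ioo _ _)
    (f' := fun y => (-1) ^ j * (profileSlope k ξ y / (π * √(1 - y ^ 2))))
    (fun y hy => ((hderiv y hy).const_mul _).continuousAt.continuousWithinAt)
    (fun y hy => ?_) (fun y hy => ?_) <;> rw [interior_Ioo] at hy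
  · exact ((hderiv y hy).const_mul _).hasDerivWithinAt
  · exact pos_of_mul_pos_left ((div_pos hc pi_pos).trans_le (hslope y hy)) (sqrt_nonneg _)
end
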